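/- arXiv:2501.05049 — 6 statements merged into one kernel-verified Lean document; each statement's English description precedes it below -/
import Mathlib

section
/- Let G be a finite simple graph and let n ≥ 1 be the number of vertices of its line graph L(G) (i.e., n = |E(G)|). Then boxi(L(G)) ≤ ⌈5 log₂ n⌉. -/
/-- An assignment of axis-parallel boxes in `ℝ^d` (given coordinate-wise, as `d` nonempty closed
intervals per vertex) representing the graph `G`: two distinct vertices are adjacent iff their
boxes intersect, i.e. iff the intervals intersect in every coordinate. -/
def SimpleGraph.IsBoxRep {V : Type*} (G : SimpleGraph V) (d : ℕ) (I : V → Fin d → Set ℝ) : Prop :=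
  (∀ v i, ∃ a b : ℝ, a ≤ b ∧ I v i = Set.Icc a b) ∧
  ∀ u v : V, u ≠ v → (G.Adj u v ↔ ∀ i, (I u i ∩ I v i).Nonempty)

/-- The boxicity of a graph: the least dimension `d` such that `G` has a representation by
axis-parallel boxes in `ℝ^d`. -/
noncomputable def SimpleGraph.boxicity {V : Type*} (G : SimpleGraph V) : ℕ :=
  sInf {d : ℕ | ∃ I : V → Fin d → Set ℝ, G.IsBoxRep d I}

/-- `G` is an interval graph: its vertices can be assigned nonempty closed real intervals so that
two distinct vertices are adjacent iff their intervals intersect. -/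
def SimpleGraph.IsIntervalGraph {V : Type*} (G : SimpleGraph V) : Prop :=
  ∃ I : V → Set ℝ, (∀ v, ∃ a b : ℝ, a ≤ b ∧ I v = Set.Icc a b) ∧
    ∀ u v : V, u ≠ v → (G.Adj u v ↔ (I u ∩ I v).Nonempty)

/-- An interval-order graph is the complement of an interval graph. -/
def SimpleGraph.IsIntervalOrderGraph {V : Type*} (G : SimpleGraph V) : Prop :=
  Gᶜ.IsIntervalGraph

/-!
Label every vertex, in each of `d` coordinates, by an element of `{0, …, 7}`, and give an edge in
each coordinate the interval spanned by the labels of its two ends. Edges sharing a vertex then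
always get meeting boxes, and two disjoint edges get disjoint intervals in a coordinate unless
their four labels form one of the 3032 quadruples (out of `8 ^ 4 = 4096`) in which neither edge
lies entirely below the other. Counting labellings, some labelling separates every one of the
fewer than `n ^ 2` ordered pairs of disjoint edges once `n ^ 2 * 3032 ^ d < 4096 ^ d`, and this
follows from `n ^ 5 ≤ 2 ^ d` because `4 * 3032 ^ 5 ≤ 4096 ^ 5`.
-/

open Finset

section

variable {V : Type*}

theorem Nat.card_subtype_comp_mul_le {κ α : Type*} [Finite V] [Finite α]
    (ι : κ ↪ V) (P : (κ → α) → Prop) :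
    Nat.card {h : V → α // P (h ∘ ι)} * Nat.card α ^ Nat.card κ ≤
      Nat.card {q // P q} * Nat.card α ^ Nat.card V := by
  have := Finite.of_injective ι ι.injective
  have hinj : Function.Injective fun h : {h : V → α // P (h ∘ ι)} =>
      ((⟨h.1 ∘ ι, h.2⟩ : {q // P q}), fun w : ↥(Set.range ι)ᶜ => h.1 w) := by
    rintro ⟨h, _⟩ ⟨h', _⟩ hh
    simp only [Prod.mk.injEq, Subtype.mk.injEq] at hh
    refine Subtype.ext (funext fun w => ?_)
    by_cases hw : w ∈ Set.range ι
    · obtain ⟨i, rfl⟩ := hw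
      exact congrFun hh.1 i
    · exact congrFun hh.2 ⟨w, hw⟩
  have hcompl : Nat.card ↥(Set.range ι)ᶜ + Nat.card κ = Nat.card V := by
    rw [Nat.card_coe_set_eq, ← Set.ncard_range_of_injective ι.injective, add_comm,
      Set.ncard_add_ncard_compl]
  calc Nat.card {h : V → α // P (h ∘ ι)} * Nat.card α ^ Nat.card κ
      ≤ Nat.card ({q // P q} × (↥(Set.range ι)ᶜ → α)) * Nat.card α ^ Nat.card κ :=
        Nat.mul_le_mul_right _ (Nat.card_le_card_of_injective _ hinj)
    _ = Nat.card {q // P q} * Nat.card α ^ Nat.card V := by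
        rw [Nat.card_prod, Nat.card_fun, mul_assoc, ← pow_add, hcompl]

theorem Nat.card_subtype_forall_apply {τ β : Type*} [Finite τ] (P : β → Prop) :
    Nat.card {g : τ → β // ∀ t, P (g t)} = Nat.card {b // P b} ^ Nat.card τ := by
  rw [Nat.card_congr (Equiv.subtypePiEquivPi (p := fun _ => P)), Nat.card_fun]

theorem exists_forall_not_of_sum_card_lt {ι Ω : Type*} [Finite Ω] (s : Finset ι)
    (bad : ι → Ω → Prop) (h : ∑ i ∈ s, Nat.card {ω // bad i ω} < Nat.card Ω) :
    ∃ ω, ∀ i ∈ s, ¬ bad i ω := by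
  classical
  have := Fintype.ofFinite Ω
  by_contra! hcover
  refine h.not_ge ?_
  calc Nat.card Ω = #(univ : Finset Ω) := by rw [card_univ, Nat.card_eq_fintype_card]
    _ ≤ #(s.biUnion fun i => univ.filter (bad i)) :=
        card_le_card fun ω _ => by simpa using hcover ω
    _ ≤ ∑ i ∈ s, #(univ.filter (bad i)) := card_biUnion_le
    _ = ∑ i ∈ s, Nat.card {ω // bad i ω} := by
        simp only [Nat.card_eq_fintype_card, Fintype.card_subtype]

theorem sq_mul_pow_le_of_pow_five_le {n d : ℕ} (hnd : n ^ 5 ≤ 2 ^ d) :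
    n ^ 2 * 3032 ^ d ≤ 4096 ^ d := by
  refine (pow_le_pow_iff_left₀ (by positivity) (by positivity) (by norm_num : 5 ≠ 0)).1 ?_
  calc (n ^ 2 * 3032 ^ d) ^ 5 = (n ^ 5) ^ 2 * (3032 ^ 5) ^ d := by
        rw [mul_pow, ← pow_mul, ← pow_mul, ← pow_mul, ← pow_mul, mul_comm d]
    _ ≤ (2 ^ d) ^ 2 * (3032 ^ 5) ^ d := by gcongr
    _ = (4 * 3032 ^ 5) ^ d := by
        rw [mul_pow, ← pow_mul, ← pow_mul, mul_comm d, pow_mul]; norm_num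
    _ ≤ (4096 ^ 5) ^ d := by gcongr; norm_num
    _ = (4096 ^ d) ^ 5 := by rw [← pow_mul, ← pow_mul, mul_comm]

theorem sq_sub_self_mul_pow_lt_of_pow_five_le {n d : ℕ} (hnd : n ^ 5 ≤ 2 ^ d) :
    (n ^ 2 - n) * 3032 ^ d < 4096 ^ d := by
  rcases n.eq_zero_or_pos with rfl | hn
  · simp
  · calc (n ^ 2 - n) * 3032 ^ d < n ^ 2 * 3032 ^ d := by
          gcongr; exact Nat.sub_lt (by positivity) hn
      _ ≤ 4096 ^ d := sq_mul_pow_le_of_pow_five_le hnd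

theorem pow_five_le_two_pow_ceil_five_mul_logb (n : ℕ) :
    n ^ 5 ≤ 2 ^ ⌈5 * Real.logb 2 n⌉₊ := by
  rcases n.eq_zero_or_pos with rfl | hn
  · simp
  have h : (n : ℝ) ^ 5 ≤ 2 ^ (⌈5 * Real.logb 2 n⌉₊ : ℝ) := by
    rw [← Real.logb_le_iff_le_rpow (by norm_num) (by positivity), Real.logb_pow]
    exact_mod_cast Nat.le_ceil _
  rw [Real.rpow_natCast] at h
  exact_mod_cast h

namespace Sym2

def labelIcc (h : V → ℝ) (e : Sym2 V) : Set ℝ := Set.Icc (e.map h).inf (e.map h).sup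

@[simp] theorem labelIcc_mk (h : V → ℝ) (u v : V) :
    labelIcc h s(u, v) = Set.Icc (h u ⊓ h v) (h u ⊔ h v) := rfl

theorem apply_mem_labelIcc (h : V → ℝ) {w : V} {e : Sym2 V} (hw : w ∈ e) :
    h w ∈ labelIcc h e := by
  induction e using Sym2.ind with
  | _ u v => rcases Sym2.mem_iff.1 hw with rfl | rfl <;> simp

end Sym2

def PairsSeparated {k : ℕ} (q : Fin 4 → Fin k) : Prop :=
  max (q 0) (q 1) < min (q 2) (q 3) ∨ max (q 2) (q 3) < min (q 0) (q 1)

instance {k : ℕ} (q : Fin 4 → Fin k) : Decidable (PairsSeparated q) :=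
  inferInstanceAs (Decidable (_ ∨ _))

theorem disjoint_labelIcc_iff_pairsSeparated {k : ℕ} (h : V → Fin k) (ι : Fin 4 → V) :
    Disjoint (s(ι 0, ι 1).labelIcc fun v => (h v : ℝ))
      (s(ι 2, ι 3).labelIcc fun v => (h v : ℝ)) ↔ PairsSeparated (h ∘ ι) := by
  simp only [Set.disjoint_iff_inter_eq_empty, Sym2.labelIcc_mk, Set.Icc_inter_Icc,
    Set.Icc_eq_empty_iff, not_le, max_lt_iff, lt_min_iff, min_lt_iff, lt_max_iff, Nat.cast_lt,
    Fin.val_fin_lt, PairsSeparated, Function.comp]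
  grind

set_option maxRecDepth 100000 in
theorem card_not_pairsSeparated_fin_eight :
    Nat.card {q : Fin 4 → Fin 8 // ¬ PairsSeparated q} = 3032 := by
  rw [Nat.card_eq_fintype_card]
  decide

namespace SimpleGraph

theorem boxicity_le_of_isBoxRep {G : SimpleGraph V} {d : ℕ} {I : V → Fin d → Set ℝ}
    (hI : G.IsBoxRep d I) : G.boxicity ≤ d :=
  Nat.sInf_le ⟨I, hI⟩

theorem isBoxRep_lineGraph_labelIcc (G : SimpleGraph V) {d : ℕ} (g : Fin d → V → ℝ)
    (hsep : ∀ e f : G.edgeSet, e ≠ f → ¬ G.lineGraph.Adj e f →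
      ∃ t, Disjoint ((e : Sym2 V).labelIcc (g t)) ((f : Sym2 V).labelIcc (g t))) :
    G.lineGraph.IsBoxRep d (fun e t => (e : Sym2 V).labelIcc (g t)) := by
  refine ⟨fun e t => ⟨_, _, Sym2.inf_le_sup _, rfl⟩,
    fun e f hne => ⟨?_, fun hmeet => ?_⟩⟩
  · intro hadj t
    obtain ⟨-, w, hwe, hwf⟩ := lineGraph_adj_iff_exists.1 hadj
    exact ⟨g t w, Sym2.apply_mem_labelIcc _ hwe, Sym2.apply_mem_labelIcc _ hwf⟩
  · by_contra hadj
    obtain ⟨t, ht⟩ := hsep e f hne hadj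
    exact Set.not_disjoint_iff_nonempty_inter.2 (hmeet t) ht

theorem exists_embedding_of_not_adj_lineGraph {G : SimpleGraph V} {e f : G.edgeSet}
    (hne : e ≠ f) (hadj : ¬ G.lineGraph.Adj e f) :
    ∃ ι : Fin 4 ↪ V, (e : Sym2 V) = s(ι 0, ι 1) ∧ (f : Sym2 V) = s(ι 2, ι 3) := by
  obtain ⟨⟨u, v⟩, he⟩ := Quot.exists_rep (e : Sym2 V)
  obtain ⟨⟨x, y⟩, hf⟩ := Quot.exists_rep (f : Sym2 V)
  replace he : (e : Sym2 V) = s(u, v) := he.symm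
  replace hf : (f : Sym2 V) = s(x, y) := hf.symm
  have hdisj : ∀ w ∈ s(u, v), w ∉ s(x, y) := fun w hwe hwf =>
    hadj (lineGraph_adj_iff_exists.2 ⟨hne, w, he ▸ hwe, hf ▸ hwf⟩)
  have huv : u ≠ v := G.ne_of_adj (by simpa [he] using e.2)
  have hxy : x ≠ y := G.ne_of_adj (by simpa [hf] using f.2)
  have hu := hdisj u (Sym2.mem_mk_left u v)
  have hv := hdisj v (Sym2.mem_mk_right u v)
  simp only [Sym2.mem_iff, not_or] at hu hv
  refine ⟨⟨![u, v, x, y], fun i j hij => ?_⟩, he, hf⟩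
  fin_cases i <;> fin_cases j <;> simp_all [eq_comm]

theorem card_not_disjoint_labelIcc_mul_le [Finite V] {k : ℕ} {G : SimpleGraph V}
    {e f : G.edgeSet} (hne : e ≠ f) (hadj : ¬ G.lineGraph.Adj e f) :
    Nat.card {h : V → Fin k // ¬ Disjoint ((e : Sym2 V).labelIcc fun v => (h v : ℝ))
        ((f : Sym2 V).labelIcc fun v => (h v : ℝ))} * k ^ 4 ≤
      Nat.card {q : Fin 4 → Fin k // ¬ PairsSeparated q} * k ^ Nat.card V := by
  obtain ⟨ι, he, hf⟩ := exists_embedding_of_not_adj_lineGraph hne hadj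
  simp_rw [he, hf, disjoint_labelIcc_iff_pairsSeparated]
  simpa using Nat.card_subtype_comp_mul_le ι (fun q => ¬ PairsSeparated q)

theorem exists_labels_disjoint_labelIcc [Finite V] (G : SimpleGraph V) {n d : ℕ}
    (hn : G.edgeSet.ncard = n) (hnd : n ^ 5 ≤ 2 ^ d) :
    ∃ g : Fin d → V → ℝ, ∀ e f : G.edgeSet, e ≠ f → ¬ G.lineGraph.Adj e f →
      ∃ t, Disjoint ((e : Sym2 V).labelIcc (g t)) ((f : Sym2 V).labelIcc (g t)) := by
  classical
  have := Fintype.ofFinite G.edgeSet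
  set N := Nat.card V
  let P := (univ : Finset G.edgeSet).offDiag.filter fun p => ¬ G.lineGraph.Adj p.1 p.2
  let meets (p : G.edgeSet × G.edgeSet) (h : V → Fin 8) : Prop :=
    ¬ Disjoint ((p.1 : Sym2 V).labelIcc fun v => (h v : ℝ))
      ((p.2 : Sym2 V).labelIcc fun v => (h v : ℝ))
  let bad (p : G.edgeSet × G.edgeSet) (g : Fin d → V → Fin 8) : Prop := ∀ t, meets p (g t)
  have hbad : ∀ p ∈ P, Nat.card {g // bad p g} * 4096 ^ d ≤ 3032 ^ d * (8 ^ N) ^ d := by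
    intro p hp
    simp only [P, mem_filter, mem_offDiag] at hp
    have h := card_not_disjoint_labelIcc_mul_le (k := 8) hp.1.2.2 hp.2
    rw [card_not_pairsSeparated_fin_eight] at h
    rw [Nat.card_subtype_forall_apply (meets p), Nat.card_fin, ← mul_pow, ← mul_pow]
    exact Nat.pow_le_pow_left h d
  have hP : #P * 3032 ^ d < 4096 ^ d := by
    have hcard : #P ≤ n ^ 2 - n := by
      calc #P ≤ #(univ : Finset G.edgeSet).offDiag := card_filter_le _ _
        _ = n ^ 2 - n := by
          rw [offDiag_card, card_univ, ← Nat.card_eq_fintype_card, Nat.card_coe_set_eq, hn, sq]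
    exact (Nat.mul_le_mul_right _ hcard).trans_lt (sq_sub_self_mul_pow_lt_of_pow_five_le hnd)
  have hsum : ∑ p ∈ P, Nat.card {g // bad p g} < Nat.card (Fin d → V → Fin 8) := by
    refine lt_of_mul_lt_mul_right (a := 4096 ^ d) ?_ (Nat.zero_le _)
    calc (∑ p ∈ P, Nat.card {g // bad p g}) * 4096 ^ d
        ≤ ∑ _p ∈ P, 3032 ^ d * (8 ^ N) ^ d := by rw [sum_mul]; exact sum_le_sum hbad
      _ = #P * 3032 ^ d * (8 ^ N) ^ d := by rw [sum_const, smul_eq_mul, mul_assoc]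
      _ < 4096 ^ d * (8 ^ N) ^ d := by gcongr
      _ = Nat.card (Fin d → V → Fin 8) * 4096 ^ d := by
        rw [Nat.card_fun, Nat.card_fun, Nat.card_fin, Nat.card_fin, mul_comm]
  obtain ⟨g, hg⟩ := exists_forall_not_of_sum_card_lt P bad hsum
  refine ⟨fun t v => (g t v : ℝ), fun e f hne hadj => ?_⟩
  simpa [bad, meets] using hg (e, f) (by simp [P, hne, hadj])

theorem boxicity_lineGraph_le_of_pow_five_le [Finite V] (G : SimpleGraph V) {n d : ℕ}
    (hn : G.edgeSet.ncard = n) (hnd : n ^ 5 ≤ 2 ^ d) : G.lineGraph.boxicity ≤ d :=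
  have ⟨g, hg⟩ := G.exists_labels_disjoint_labelIcc hn hnd
  boxicity_le_of_isBoxRep (G.isBoxRep_lineGraph_labelIcc g hg)

end SimpleGraph

end

theorem boxicity_lineGraph_le_general {V : Type*} [Fintype V] (G : SimpleGraph V)
    (n : ℕ) (hn : G.edgeSet.ncard = n) :
    ((G.lineGraph).boxicity : ℤ) ≤ ⌈5 * Real.logb 2 (n : ℝ)⌉ := by
  have hlog : 0 ≤ 5 * Real.logb 2 (n : ℝ) :=
    mul_nonneg (by norm_num) (div_nonneg (Real.log_natCast_nonneg n) (by positivity))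
  rw [← Int.natCast_ceil_eq_ceil hlog, Nat.cast_le]
  exact G.boxicity_lineGraph_le_of_pow_five_le hn (pow_five_le_two_pow_ceil_five_mul_logb n)

/-- If the line graph of `G` has `n ≥ 1` vertices (i.e. `G` has `n` edges), then
`boxi(L(G)) ≤ ⌈5 log₂ n⌉`. -/
theorem boxicity_lineGraph_le {V : Type*} [Fintype V] (G : SimpleGraph V)
    (n : ℕ) (hn : G.edgeSet.ncard = n) (h1 : 1 ≤ n) :
    ((G.lineGraph).boxicity : ℤ) ≤ ⌈5 * Real.logb 2 (n : ℝ)⌉ :=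
  boxicity_lineGraph_le_general G n hn
end

section
/- Let G = (V,E) be a finite simple graph and let u, v ∈ V be distinct vertices with uv ∉ E. Then boxi(G) ≤ boxi(G[V ∖ {u,v}]) + 1, where G[V ∖ {u,v}] is the subgraph of G induced on V ∖ {u,v}. -/
/-! A box representation of `G[V ∖ {u, v}]` in dimension `d` extends to one of `G` in dimension
`d + 1`. In the first `d` coordinates `u` and `v` get a long interval meeting all the others, so
these coordinates only constrain pairs inside `V ∖ {u, v}`. In the new coordinate `u` sits at `0`
and `v` at `1`, while every other vertex `w` gets an interval containing `1/2` that reaches down to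
`0` iff `w ∼ u` and up to `1` iff `w ∼ v`; this coordinate represents `G` with `V ∖ {u, v}` turned
into a clique, and it keeps `u` and `v` apart because they are non-adjacent. -/

open Set

namespace SimpleGraph

variable {V : Type*} {G : SimpleGraph V} {d : ℕ}

theorem IsBoxRep.boxicity_le {I : V → Fin d → Set ℝ} (h : G.IsBoxRep d I) : G.boxicity ≤ d :=
  Nat.sInf_le ⟨I, h⟩

section Star

variable (G)

open Classical in
noncomputable def starInterval (x w : V) : Set ℝ :=
  if w = x then Icc 0 0 else Icc (if G.Adj x w then 0 else 1) 1

theorem starInterval_inter_nonempty_iff {x y z : V} (hyz : y ≠ z) :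
    (G.starInterval x y ∩ G.starInterval x z).Nonempty ↔
      (y = x → G.Adj x z) ∧ (z = x → G.Adj x y) := by
  rcases eq_or_ne y x with rfl | hy
  · by_cases h : G.Adj y z <;> simp [starInterval, hyz.symm, h]
  rcases eq_or_ne z x with rfl | hz
  · by_cases h : G.Adj z y <;> simp [starInterval, hy, h]
  exact iff_of_true ⟨1, by simp [starInterval, hy, hz]; split_ifs <;> norm_num⟩
    ⟨hy.elim, hz.elim⟩

theorem exists_isBoxRep [Finite V] : ∃ d, ∃ I : V → Fin d → Set ℝ, G.IsBoxRep d I := by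
  obtain ⟨d, ⟨e⟩⟩ := Finite.exists_equiv_fin V
  refine ⟨d, fun w i => G.starInterval (e.symm i) w, fun w i => ?_, fun y z hyz => ?_⟩
  · simp only [starInterval]
    split_ifs
    exacts [⟨0, 0, le_rfl, rfl⟩, ⟨0, 1, zero_le_one, rfl⟩, ⟨1, 1, le_rfl, rfl⟩]
  simp only [G.starInterval_inter_nonempty_iff hyz]
  refine ⟨fun h i => ⟨fun hy => hy ▸ h, fun hz => hz ▸ h.symm⟩, fun h => ?_⟩
  simpa using (h (e y)).1

theorem exists_isBoxRep_boxicity [Finite V] :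
    ∃ I : V → Fin G.boxicity → Set ℝ, G.IsBoxRep G.boxicity I :=
  Nat.sInf_mem G.exists_isBoxRep

end Star

theorem IsBoxRep.exists_Icc_inter_nonempty [Finite V] {I : V → Fin d → Set ℝ}
    (h : G.IsBoxRep d I) : ∃ a b : ℝ, a ≤ b ∧ ∀ w i, (Icc a b ∩ I w i).Nonempty := by
  choose a b hab hI using h.1
  obtain ⟨M, hM⟩ := Finite.exists_le fun p : V × Fin d => |a p.1 p.2|
  refine ⟨-|M|, |M|, neg_le_self (abs_nonneg M), fun w i => ⟨a w i, ?_, ?_⟩⟩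
  · exact abs_le.1 ((hM (w, i)).trans (le_abs_self M))
  · exact hI w i ▸ left_mem_Icc.2 (hab w i)

open Classical in
noncomputable def extendBoxes (W : Set V) (J : W → Fin d → Set ℝ) (a b : ℝ) :
    V → Fin d → Set ℝ :=
  fun w i => if h : w ∈ W then J ⟨w, h⟩ i else Icc a b

section Extend

variable {W : Set V} {J : W → Fin d → Set ℝ} {a b : ℝ}

theorem IsBoxRep.extendBoxes_eq_Icc (hJ : (G.induce W).IsBoxRep d J) (hab : a ≤ b)
    (w : V) (i : Fin d) : ∃ a' b' : ℝ, a' ≤ b' ∧ extendBoxes W J a b w i = Icc a' b' := by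
  by_cases hw : w ∈ W
  · simpa [extendBoxes, hw] using hJ.1 ⟨w, hw⟩ i
  · exact ⟨a, b, hab, by simp [extendBoxes, hw]⟩

theorem IsBoxRep.extendBoxes_inter_nonempty_iff (hJ : (G.induce W).IsBoxRep d J) (hab : a ≤ b)
    (hmeet : ∀ w i, (Icc a b ∩ J w i).Nonempty) {x y : V} (hxy : x ≠ y) :
    (∀ i, (extendBoxes W J a b x i ∩ extendBoxes W J a b y i).Nonempty) ↔
      (x ∈ W → y ∈ W → G.Adj x y) := by
  by_cases hx : x ∈ W <;> by_cases hy : y ∈ W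
  · simpa [extendBoxes, hx, hy] using (hJ.2 ⟨x, hx⟩ ⟨y, hy⟩ (by simpa using hxy)).symm
  · simpa [extendBoxes, hx, hy, inter_comm] using fun i => hmeet ⟨x, hx⟩ i
  · simpa [extendBoxes, hx, hy] using fun i => hmeet ⟨y, hy⟩ i
  · simpa [extendBoxes, hx, hy] using fun _ => hab

end Extend

section Pair

variable {u v : V}

variable (G) in
open Classical in
noncomputable def pairInterval (u v w : V) : Set ℝ :=
  if w = u then Icc 0 0 else if w = v then Icc 1 1 else
    Icc (if G.Adj w u then 0 else 1 / 2) (if G.Adj w v then 1 else 1 / 2)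

variable (G) in
theorem pairInterval_eq_Icc (u v w : V) :
    ∃ a b : ℝ, a ≤ b ∧ G.pairInterval u v w = Icc a b := by
  simp only [pairInterval]
  split_ifs <;> exact ⟨_, _, by norm_num, rfl⟩

theorem pairInterval_left : G.pairInterval u v u = {0} := by
  simp [pairInterval]

theorem pairInterval_right (hvu : v ≠ u) : G.pairInterval u v v = {1} := by
  simp [pairInterval, hvu]

theorem zero_mem_pairInterval_iff {w : V} (hwu : w ≠ u) (hwv : w ≠ v) :
    (0 : ℝ) ∈ G.pairInterval u v w ↔ G.Adj w u := by
  simp only [pairInterval, hwu, hwv, if_false, mem_Icc]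
  split_ifs <;> norm_num [*]

theorem one_mem_pairInterval_iff {w : V} (hwu : w ≠ u) (hwv : w ≠ v) :
    (1 : ℝ) ∈ G.pairInterval u v w ↔ G.Adj w v := by
  simp only [pairInterval, hwu, hwv, if_false, mem_Icc]
  split_ifs <;> norm_num [*]

theorem half_mem_pairInterval {w : V} (hwu : w ≠ u) (hwv : w ≠ v) :
    (1 / 2 : ℝ) ∈ G.pairInterval u v w := by
  simp only [pairInterval, hwu, hwv, if_false]
  constructor <;> split_ifs <;> norm_num

theorem pairInterval_left_inter_nonempty_iff (huv : ¬ G.Adj u v) {y : V} (huy : u ≠ y) :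
    (G.pairInterval u v u ∩ G.pairInterval u v y).Nonempty ↔ G.Adj u y := by
  rw [pairInterval_left, singleton_inter_nonempty]
  rcases eq_or_ne y v with rfl | hyv
  · simpa [pairInterval_right huy.symm] using huv
  · rw [zero_mem_pairInterval_iff huy.symm hyv, G.adj_comm]

theorem pairInterval_right_inter_nonempty_iff (huv : ¬ G.Adj u v) (hvu : v ≠ u) {y : V}
    (hvy : v ≠ y) :
    (G.pairInterval u v v ∩ G.pairInterval u v y).Nonempty ↔ G.Adj v y := by
  rw [pairInterval_right hvu, singleton_inter_nonempty]
  rcases eq_or_ne y u with rfl | hyu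
  · simpa [pairInterval_left] using fun h => huv h.symm
  · rw [one_mem_pairInterval_iff hyu hvy.symm, G.adj_comm]

theorem pairInterval_inter_nonempty_iff_of_mem (huv : ¬ G.Adj u v) {x y : V}
    (hx : x ∈ ({u, v} : Set V)) (hxy : x ≠ y) :
    (G.pairInterval u v x ∩ G.pairInterval u v y).Nonempty ↔ G.Adj x y := by
  rcases eq_or_ne x u with rfl | hxu
  · exact pairInterval_left_inter_nonempty_iff huv hxy
  obtain rfl : x = v := by simpa [hxu] using hx
  exact pairInterval_right_inter_nonempty_iff huv hxu hxy

theorem pairInterval_inter_nonempty_iff (huv : ¬ G.Adj u v) {x y : V} (hxy : x ≠ y) :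
    (G.pairInterval u v x ∩ G.pairInterval u v y).Nonempty ↔
      (x ∈ ({u, v} : Set V)ᶜ ∧ y ∈ ({u, v} : Set V)ᶜ) ∨ G.Adj x y := by
  by_cases hx : x ∈ ({u, v} : Set V)
  · simp [pairInterval_inter_nonempty_iff_of_mem huv hx hxy, hx]
  by_cases hy : y ∈ ({u, v} : Set V)
  · rw [inter_comm, pairInterval_inter_nonempty_iff_of_mem huv hy hxy.symm, G.adj_comm]
    simp [hy]
  simp only [mem_insert_iff, mem_singleton_iff, not_or] at hx hy
  exact iff_of_true ⟨1 / 2, half_mem_pairInterval hx.1 hx.2, half_mem_pairInterval hy.1 hy.2⟩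
    (.inl ⟨by simpa using hx, by simpa using hy⟩)

end Pair

theorem isBoxRep_snoc {I : V → Fin d → Set ℝ} {L : V → Set ℝ}
    (hI : ∀ w i, ∃ a b : ℝ, a ≤ b ∧ I w i = Icc a b) (hL : ∀ w, ∃ a b : ℝ, a ≤ b ∧ L w = Icc a b)
    (hadj : ∀ x y, x ≠ y →
      (G.Adj x y ↔ (∀ i, (I x i ∩ I y i).Nonempty) ∧ (L x ∩ L y).Nonempty)) :
    G.IsBoxRep (d + 1) fun w => Fin.snoc (I w) (L w) := by
  refine ⟨fun w => Fin.forall_fin_succ'.2 ⟨?_, ?_⟩, fun x y hxy => ?_⟩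
  · simpa using hI w
  · simpa using hL w
  · simpa [Fin.forall_fin_succ'] using hadj x y hxy

end SimpleGraph

open SimpleGraph

theorem boxicity_le_boxicity_induce_add_one_general
    {V : Type*} [Fintype V] (G : SimpleGraph V) (u v : V)
    (hadj : ¬ G.Adj u v) :
    G.boxicity ≤ (G.induce (({u, v} : Set V)ᶜ)).boxicity + 1 := by
  obtain ⟨J, hJ⟩ := (G.induce ({u, v} : Set V)ᶜ).exists_isBoxRep_boxicity
  obtain ⟨a, b, hab, hmeet⟩ := hJ.exists_Icc_inter_nonempty
  refine (isBoxRep_snoc (hJ.extendBoxes_eq_Icc hab) (G.pairInterval_eq_Icc u v)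
    fun x y hxy => ?_).boxicity_le
  rw [hJ.extendBoxes_inter_nonempty_iff hab hmeet hxy, pairInterval_inter_nonempty_iff hadj hxy]
  tauto

/-- If `u ≠ v` are non-adjacent vertices of `G`, then
`boxi(G) ≤ boxi(G[V ∖ {u,v}]) + 1`. -/
theorem boxicity_le_boxicity_induce_add_one
    {V : Type*} [Fintype V] (G : SimpleGraph V) (u v : V)
    (huv : u ≠ v) (hadj : ¬ G.Adj u v) :
    G.boxicity ≤ (G.induce (({u, v} : Set V)ᶜ)).boxicity + 1 :=
  boxicity_le_boxicity_induce_add_one_general G u v hadj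
end

section
/- Every finite simple graph G on n vertices satisfies boxi(G) ≤ ⌊n/2⌋. -/
/-!
Pick two non-adjacent vertices `u, v` and let `s` be the rest. With `K` the complete graph on `s`,
`G = (G ⊔ Kᶜ) ⊓ (G ⊔ K)`, and boxicity is subadditive under `⊓` (concatenate the coordinates).
In `G ⊔ Kᶜ` the vertices `u, v` are universal, so it needs no more dimensions than `G[s]`: give
`u, v` a box meeting every box of `G[s]`. The graph `G ⊔ K` is an interval graph: `u ↦ [0, 1]`,
`v ↦ [2, 3]`, and each `x ∈ s` gets an interval around `3/2` that reaches `1` iff `x ~ u` and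
`2` iff `x ~ v`. By induction on `|V|`, each removed pair costs one dimension.
-/

theorem Set.Icc_inter_Icc_nonempty_iff {α : Type*} [Lattice α] {a b c d : α} (hab : a ≤ b)
    (hcd : c ≤ d) : (Set.Icc a b ∩ Set.Icc c d).Nonempty ↔ a ≤ d ∧ c ≤ b := by
  rw [Set.Icc_inter_Icc, Set.nonempty_Icc, sup_le_iff, le_inf_iff, le_inf_iff]
  tauto

theorem sup_compl_inf_sup_self {α : Type*} [BooleanAlgebra α] (a b : α) :
    (a ⊔ bᶜ) ⊓ (a ⊔ b) = a := by
  rw [← sup_inf_left, compl_inf_self, sup_bot_eq]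

namespace SimpleGraph

variable {V : Type*}

def HasBoxRep (G : SimpleGraph V) (d : ℕ) : Prop :=
  ∃ I, G.IsBoxRep d I

theorem HasBoxRep.boxicity_le {G : SimpleGraph V} {d : ℕ} (h : G.HasBoxRep d) :
    G.boxicity ≤ d :=
  Nat.sInf_le h

theorem hasBoxRep_top : (⊤ : SimpleGraph V).HasBoxRep 0 :=
  ⟨fun _ => Fin.elim0, fun _ i => i.elim0, fun u v huv => by simp [huv]⟩

theorem IsIntervalGraph.hasBoxRep_one {G : SimpleGraph V} (h : G.IsIntervalGraph) :
    G.HasBoxRep 1 := by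
  obtain ⟨I, hIcc, hadj⟩ := h
  exact ⟨fun v _ => I v, fun v _ => hIcc v, fun u v huv => by simpa using hadj u v huv⟩

theorem HasBoxRep.inf {G₁ G₂ : SimpleGraph V} {d₁ d₂ : ℕ} (h₁ : G₁.HasBoxRep d₁)
    (h₂ : G₂.HasBoxRep d₂) : (G₁ ⊓ G₂).HasBoxRep (d₁ + d₂) := by
  obtain ⟨I₁, hIcc₁, hadj₁⟩ := h₁
  obtain ⟨I₂, hIcc₂, hadj₂⟩ := h₂
  refine ⟨fun v => Fin.append (I₁ v) (I₂ v), fun v => ?_, fun u v huv => ?_⟩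
  · simpa [Fin.forall_fin_add] using ⟨hIcc₁ v, hIcc₂ v⟩
  · simp [Fin.forall_fin_add, hadj₁ u v huv, hadj₂ u v huv]

def completeOn (s : Set V) : SimpleGraph V where
  Adj x y := x ≠ y ∧ x ∈ s ∧ y ∈ s
  symm := ⟨fun _ _ h => ⟨h.1.symm, h.2.2, h.2.1⟩⟩

@[simp]
theorem completeOn_adj {s : Set V} {x y : V} : (completeOn s).Adj x y ↔ x ≠ y ∧ x ∈ s ∧ y ∈ s :=
  Iff.rfl

theorem HasBoxRep.sup_compl_completeOn [Finite V] {G : SimpleGraph V} {s : Set V} {d : ℕ}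
    (h : (G.induce s).HasBoxRep d) : (G ⊔ (completeOn s)ᶜ).HasBoxRep d := by
  obtain ⟨I, hIcc, hadj⟩ := h
  have hne : ∀ w i, (I w i).Nonempty := fun w i => by
    obtain ⟨a, b, hab, h⟩ := hIcc w i
    exact h ▸ Set.nonempty_Icc.2 hab
  choose p hp using hne
  choose M hM using fun i => Finite.exists_le fun w : s => |p w i|
  have hmem : ∀ w i, p w i ∈ Set.Icc (-|M i|) |M i| := fun w i =>
    abs_le.1 ((hM i w).trans (le_abs_self _))
  classical
  refine ⟨fun x i => if hx : x ∈ s then I ⟨x, hx⟩ i else Set.Icc (-|M i|) |M i|,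
    fun x i => ?_, fun x y hxy => ?_⟩
  · dsimp only
    split_ifs with hx
    exacts [hIcc _ i, ⟨-|M i|, |M i|, neg_le_self (abs_nonneg _), rfl⟩]
  · by_cases hx : x ∈ s <;> by_cases hy : y ∈ s
    · simpa [hx, hy, hxy] using hadj ⟨x, hx⟩ ⟨y, hy⟩ (by simpa using hxy)
    · simpa [hx, hy, hxy] using fun i => ⟨_, hp ⟨x, hx⟩ i, hmem _ i⟩
    · simpa [hx, hy, hxy] using fun i => ⟨_, hmem _ i, hp ⟨y, hy⟩ i⟩
    · simp [hx, hy, hxy]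

theorem isIntervalGraph_sup_completeOn_compl_pair {G : SimpleGraph V} {u v : V} (huv : u ≠ v)
    (hnadj : ¬G.Adj u v) : (G ⊔ completeOn {u, v}ᶜ).IsIntervalGraph := by
  classical
  let lo : V → ℝ := fun x => if x = u then 0 else if x = v then 2 else if G.Adj u x then 1 else 3/2
  let hi : V → ℝ := fun x => if x = u then 1 else if x = v then 3 else if G.Adj v x then 2 else 3/2
  have hlohi : ∀ x, lo x ≤ hi x := fun x => by
    simp only [lo, hi]
    split_ifs <;> norm_num
  refine ⟨fun x => Set.Icc (lo x) (hi x), fun x => ⟨_, _, hlohi x, rfl⟩, fun x y hxy => ?_⟩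
  rw [Set.Icc_inter_Icc_nonempty_iff (hlohi x) (hlohi y)]
  simp only [sup_adj, completeOn_adj, Set.mem_compl_iff, Set.mem_insert_iff,
    Set.mem_singleton_iff, lo, hi]
  by_cases hxu : x = u <;> by_cases hxv : x = v <;> by_cases hyu : y = u <;>
    by_cases hyv : y = v <;> simp_all [adj_comm] <;> split_ifs <;> norm_num <;> simp_all

theorem exists_hasBoxRep_le_half_card [Finite V] (G : SimpleGraph V) :
    ∃ d ≤ Nat.card V / 2, G.HasBoxRep d := by
  induction hn : Nat.card V using Nat.strong_induction_on generalizing V with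
  | _ n ih =>
  by_cases hG : G = ⊤
  · exact ⟨0, Nat.zero_le _, hG ▸ hasBoxRep_top⟩
  obtain ⟨u, v, huv, hnadj⟩ : ∃ u v, u ≠ v ∧ ¬G.Adj u v := by
    contrapose! hG
    ext u v
    exact ⟨fun h => h.ne, hG u v⟩
  set s : Set V := {u, v}ᶜ
  have hs : Nat.card s + 2 = n := by
    rw [Nat.card_coe_set_eq, ← Set.ncard_pair huv, Set.ncard_compl_add_ncard, hn]
  obtain ⟨d, hd, hrep⟩ := ih (Nat.card s) (by omega) (G.induce s) rfl
  refine ⟨d + 1, by omega, ?_⟩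
  rw [← sup_compl_inf_sup_self G (completeOn s)]
  exact hrep.sup_compl_completeOn.inf
    (isIntervalGraph_sup_completeOn_compl_pair huv hnadj).hasBoxRep_one

end SimpleGraph

/-- Every finite simple graph on `n` vertices has boxicity at most `⌊n/2⌋`. -/
theorem boxicity_le_half_card {V : Type*} [Fintype V] (G : SimpleGraph V)
    (n : ℕ) (hn : Fintype.card V = n) :
    G.boxicity ≤ n / 2 := by
  obtain ⟨d, hd, hrep⟩ := G.exists_hasBoxRep_le_half_card
  rw [Nat.card_eq_fintype_card, hn] at hd
  exact hrep.boxicity_le.trans hd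
end

section
/- Let G = (V,E) be a finite simple graph. For any ordering σ of V, the graph G^σ is an interval-order subgraph of G. Conversely, every maximal interval-order subgraph of G equals G^σ for some ordering σ of V. -/
/-- Given an ordering `σ = (v_1, …, v_n)` of the vertices of `G`, the graph `G^σ`:
with `V_0 = V` and `V_i = V_{i-1} ∩ N_G(v_i)` (so `V_i = ⋂_{l ≤ i} N_G(v_l)`), its edge set is
`E_1 ∪ … ∪ E_n` where `E_i` consists of the edges joining `v_i` to the vertices of `V_i`. -/
def orderGraph {V : Type*} {n : ℕ} (G : SimpleGraph V) (σ : Fin n ≃ V) : SimpleGraph V :=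
  SimpleGraph.fromRel (fun x w => ∃ i : Fin n, x = σ i ∧ ∀ l : Fin n, l ≤ i → G.Adj (σ l) w)

/-!
If `Hᶜ` is represented by intervals `[l v, r v]`, then `u` and `w` are adjacent in `H` exactly
when one interval lies strictly to the left of the other. In `G^σ`, give `w` the interval from the
position in `σ` of its first non-neighbour to its own position: `σ i` is adjacent to `w` in `G^σ`
iff `i` precedes that first non-neighbour.
Conversely, list the vertices of a maximal `H` by increasing right endpoint `r`: if `r x < l y`,
every vertex `z` up to `x` has `r z < l y`, so the interval of `z` misses that of `y`, whence
`z` is adjacent to `y` in `H ≤ G`. Thus `H ≤ G^σ`, and maximality forces equality.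
-/

theorem Set.not_nonempty_Icc_inter_Icc_iff {α : Type*} [LinearOrder α] {a b c d : α}
    (hab : a ≤ b) (hcd : c ≤ d) : ¬(Set.Icc a b ∩ Set.Icc c d).Nonempty ↔ b < c ∨ d < a := by
  rw [Set.Icc_inter_Icc, Set.nonempty_Icc, sup_le_iff, le_inf_iff, le_inf_iff]
  grind

namespace SimpleGraph

variable {V : Type*} {H : SimpleGraph V}

/-- `H` is the comparability graph of the interval order given by the intervals `[l v, r v]`. -/
def IsIntervalOrderRep (H : SimpleGraph V) (l r : V → ℝ) : Prop :=
  (∀ v, l v ≤ r v) ∧ ∀ u w, u ≠ w → (H.Adj u w ↔ r u < l w ∨ r w < l u)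

theorem isIntervalOrderGraph_iff :
    H.IsIntervalOrderGraph ↔ ∃ l r : V → ℝ, H.IsIntervalOrderRep l r := by
  have key : ∀ l r : V → ℝ, (∀ v, l v ≤ r v) → ∀ u w, u ≠ w →
      ((Hᶜ.Adj u w ↔ (Set.Icc (l u) (r u) ∩ Set.Icc (l w) (r w)).Nonempty) ↔
        (H.Adj u w ↔ r u < l w ∨ r w < l u)) := by
    intro l r hlr u w huw
    rw [compl_adj, ← Set.not_nonempty_Icc_inter_Icc_iff (hlr u) (hlr w)]
    tauto
  constructor
  · rintro ⟨I, hI, hadj⟩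
    choose l r hlr hI using hI
    refine ⟨l, r, hlr, fun u w huw => (key l r hlr u w huw).mp ?_⟩
    rw [← hI, ← hI]
    exact hadj u w huw
  · rintro ⟨l, r, hlr, hadj⟩
    exact ⟨fun v => Set.Icc (l v) (r v), fun v => ⟨l v, r v, hlr v, rfl⟩,
      fun u w huw => (key l r hlr u w huw).mpr (hadj u w huw)⟩

end SimpleGraph

section orderGraph

variable {V : Type*} {n : ℕ} (G : SimpleGraph V) (σ : Fin n ≃ V)

noncomputable def firstNonNeighbor (w : V) : Fin n :=
  wellFounded_lt.min {l | ¬G.Adj (σ l) w} ⟨σ.symm w, by simp⟩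

theorem not_adj_firstNonNeighbor (w : V) : ¬G.Adj (σ (firstNonNeighbor G σ w)) w :=
  wellFounded_lt.min_mem {l | ¬G.Adj (σ l) w} _

theorem adj_of_lt_firstNonNeighbor {w : V} {l : Fin n} (hl : l < firstNonNeighbor G σ w) :
    G.Adj (σ l) w :=
  not_not.mp fun h => wellFounded_lt.not_lt_min {l | ¬G.Adj (σ l) w} h hl

theorem firstNonNeighbor_le_symm (w : V) : firstNonNeighbor G σ w ≤ σ.symm w :=
  not_lt.mp fun h => by simpa using adj_of_lt_firstNonNeighbor G σ h

theorem orderGraph_adj_iff {u w : V} :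
    (orderGraph G σ).Adj u w ↔
      u ≠ w ∧ (σ.symm u < firstNonNeighbor G σ w ∨ σ.symm w < firstNonNeighbor G σ u) := by
  have hrel : ∀ x y : V, (∃ i, x = σ i ∧ ∀ l, l ≤ i → G.Adj (σ l) y) ↔
      σ.symm x < firstNonNeighbor G σ y := by
    refine fun x y => ⟨?_, fun h => ⟨σ.symm x, (σ.apply_symm_apply x).symm,
      fun l hl => adj_of_lt_firstNonNeighbor G σ (hl.trans_lt h)⟩⟩
    rintro ⟨i, rfl, h⟩
    rw [σ.symm_apply_apply]
    exact lt_of_not_ge fun hle => not_adj_firstNonNeighbor G σ y (h _ hle)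
  rw [orderGraph, SimpleGraph.fromRel_adj, hrel, hrel]

theorem orderGraph_le : orderGraph G σ ≤ G := by
  intro u w h
  rcases ((orderGraph_adj_iff G σ).mp h).2 with h | h
  · simpa using adj_of_lt_firstNonNeighbor G σ h
  · simpa using (adj_of_lt_firstNonNeighbor G σ h).symm

theorem orderGraph_isIntervalOrderGraph : (orderGraph G σ).IsIntervalOrderGraph := by
  refine SimpleGraph.isIntervalOrderGraph_iff.mpr
    ⟨fun v => ((firstNonNeighbor G σ v : ℕ) : ℝ), fun v => ((σ.symm v : ℕ) : ℝ),
      fun v => Nat.cast_le.mpr (firstNonNeighbor_le_symm G σ v), fun u w huw => ?_⟩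
  simp only [orderGraph_adj_iff, Nat.cast_lt, Fin.lt_def, huw, ne_eq, not_false_eq_true,
    true_and]

theorem le_orderGraph_of_isIntervalOrderRep {H : SimpleGraph V} (hHG : H ≤ G) {l r : V → ℝ}
    (hH : H.IsIntervalOrderRep l r) (hσ : Monotone (r ∘ σ)) : H ≤ orderGraph G σ := by
  obtain ⟨hlr, hadj⟩ := hH
  have left_of : ∀ x y, r x < l y → ∃ i, x = σ i ∧ ∀ k, k ≤ i → G.Adj (σ k) y := by
    refine fun x y hxy => ⟨σ.symm x, (σ.apply_symm_apply x).symm, fun k hk => ?_⟩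
    have hkx : r (σ k) ≤ r x := by simpa using hσ hk
    have hky : σ k ≠ y := by
      rintro rfl
      exact (hkx.trans_lt hxy).not_ge (hlr _)
    exact hHG ((hadj _ _ hky).mpr (Or.inl (hkx.trans_lt hxy)))
  intro u w huw
  rw [orderGraph, SimpleGraph.fromRel_adj]
  exact ⟨huw.ne, ((hadj u w huw.ne).mp huw).imp (left_of u w) (left_of w u)⟩

end orderGraph

theorem Fintype.exists_equiv_fin_monotone_comp {V α : Type*} [Fintype V] [LinearOrder α]
    (f : V → α) {n : ℕ} (hn : Fintype.card V = n) : ∃ σ : Fin n ≃ V, Monotone (f ∘ σ) := by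
  let e := (Fintype.equivFinOfCardEq hn).symm
  exact ⟨(Tuple.sort (f ∘ e)).trans e, Tuple.monotone_sort (f ∘ e)⟩

/-- For any ordering `σ` of `V`, `G^σ` is an interval-order subgraph of `G`; conversely, every
maximal interval-order subgraph of `G` is `G^σ` for some ordering `σ` of `V`. -/
theorem orderGraph_isIntervalOrder_and_maximal_eq_orderGraph
    {V : Type*} [Fintype V] (G : SimpleGraph V) (n : ℕ) (hn : Fintype.card V = n) :
    (∀ σ : Fin n ≃ V, orderGraph G σ ≤ G ∧ (orderGraph G σ).IsIntervalOrderGraph) ∧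
    (∀ H : SimpleGraph V,
      Maximal (fun H' : SimpleGraph V => H' ≤ G ∧ H'.IsIntervalOrderGraph) H →
      ∃ σ : Fin n ≃ V, H = orderGraph G σ) := by
  have orderGraph_mem (σ : Fin n ≃ V) :=
    And.intro (orderGraph_le G σ) (orderGraph_isIntervalOrderGraph G σ)
  refine ⟨orderGraph_mem, fun H hH => ?_⟩
  obtain ⟨l, r, hrep⟩ := SimpleGraph.isIntervalOrderGraph_iff.mp hH.prop.2
  obtain ⟨σ, hσ⟩ := Fintype.exists_equiv_fin_monotone_comp r hn
  have hle := le_orderGraph_of_isIntervalOrderRep G σ hH.prop.1 hrep hσ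
  exact ⟨σ, le_antisymm hle (hH.2 (orderGraph_mem σ) hle)⟩
end

section
/- Let n ≥ 5 and let H be a maximal interval-order subgraph of the line graph L(K_n). Then there exist three distinct vertices a, b, c of K_n such that δ_{ab} ∪ δ_{ac} ⊆ E(H). -/
namespace LineGraphComplete

variable {n : ℕ}

/-- The vertex type of `L(K_n)`: the edges of the complete graph `K_n`. -/
abbrev EKn (n : ℕ) := (⊤ : SimpleGraph (Fin n)).edgeSet

/-- `δ_{uv}`: the edges of `L(K_n)` joining the edge `uv` to the other edges of `K_n`
incident to `u` or to `v` (the star of centre `uv`). -/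
def delta (u v : Fin n) : SimpleGraph (EKn n) :=
  SimpleGraph.fromRel (fun e f =>
    (e : Sym2 (Fin n)) = s(u, v) ∧ (u ∈ (f : Sym2 (Fin n)) ∨ v ∈ (f : Sym2 (Fin n))))

/-!
Represent `Hᶜ` by intervals `[l e, r e]` with pairwise distinct endpoints, so that `H` joins two
edges exactly when their intervals are disjoint. Let `e₁` be the edge whose interval ends first and
`e₂` the one whose interval starts last. Maximality of `H` puts the whole star of `e₁` in `L(K_n)`
into `H`: if a neighbour `f` of `e₁` had an interval meeting that of `e₁`, one could shorten the
interval of `f` from the left past `r e₁` without creating an adjacency outside `L(K_n)`, which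
would enlarge `H`. Symmetrically for `e₂`. Were `e₁` and `e₂` disjoint edges, a common neighbour
`g` would give `r e₁ < l g ≤ r g < l e₂`, so `e₁ e₂` would be an edge of `H ≤ L(K_n)`. Hence
`e₁ = ab` and `e₂ = ac`.
-/

end LineGraphComplete

open Function Filter Topology

lemma eventually_mul_lt (k : ℝ) {x : ℝ} (hx : 0 < x) : ∀ᶠ ε in 𝓝[>] 0, ε * k < x :=
  nhdsWithin_le_nhds <|
    ((continuous_mul_const k).tendsto' 0 0 (zero_mul k)).eventually (gt_mem_nhds hx)

lemma eventually_le_iff_sub_le_add (a b : ℝ) {c d : ℝ} (hc : 0 ≤ c) (hd : 0 ≤ d) :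
    ∀ᶠ ε in 𝓝[>] 0, (a ≤ b ↔ a - ε * c ≤ b + ε * d) := by
  rcases le_or_gt a b with hab | hab
  · filter_upwards [self_mem_nhdsWithin] with ε (hε : 0 < ε)
    exact iff_of_true hab (by nlinarith [mul_nonneg hε.le hc, mul_nonneg hε.le hd])
  · filter_upwards [eventually_mul_lt (c + d) (sub_pos.2 hab)] with ε hε
    exact iff_of_false hab.not_ge (by linarith)

lemma eventually_add_mul_ne {a b c d : ℝ} (h : a ≠ b ∨ c ≠ d) :
    ∀ᶠ ε in 𝓝[>] 0, a + ε * c ≠ b + ε * d := by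
  rcases eq_or_ne a b with rfl | hab
  · filter_upwards [self_mem_nhdsWithin] with ε (hε : 0 < ε)
    simpa [hε.ne'] using h
  rcases hab.lt_or_gt with hab | hab
  · filter_upwards [eventually_mul_lt (c - d) (sub_pos.2 hab)] with ε hε
    exact ne_of_lt (by linarith)
  · filter_upwards [eventually_mul_lt (d - c) (sub_pos.2 hab)] with ε hε
    exact ne_of_gt (by linarith)

lemma eventually_injective_add_smul {V : Type*} [Finite V] (f : V → ℝ) {c : V → ℝ}
    (hc : Injective c) : ∀ᶠ ε in 𝓝[>] (0 : ℝ), Injective (f + ε • c) := by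
  have hpair : ∀ u w, ∀ᶠ ε in 𝓝[>] (0 : ℝ), u ≠ w → f u + ε * c u ≠ f w + ε * c w := by
    intro u w
    by_cases huw : u = w
    · exact .of_forall fun _ h => absurd huw h
    · exact (eventually_add_mul_ne (.inr (hc.ne huw))).mono fun _ h _ => h
  filter_upwards [eventually_all.2 fun u => eventually_all.2 fun w => hpair u w] with ε hε u w huw
  by_contra hne
  exact hε u w hne huw

theorem exists_injective_endpoints {V : Type*} [Finite V] (l r : V → ℝ) :
    ∃ l' r' : V → ℝ, Injective l' ∧ Injective r' ∧ ∀ u w, (l u ≤ r w ↔ l' u ≤ r' w) := by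
  obtain ⟨k, hk⟩ := Countable.exists_injective_nat V
  set c : V → ℝ := fun v => k v
  have hc : Injective c := Nat.cast_injective.comp hk
  have hc₀ (v : V) : 0 ≤ c v := Nat.cast_nonneg _
  have hle : ∀ᶠ ε in 𝓝[>] (0 : ℝ), ∀ u w, (l u ≤ r w ↔ l u - ε * c u ≤ r w + ε * c w) :=
    eventually_all.2 fun u => eventually_all.2 fun w =>
      eventually_le_iff_sub_le_add _ _ (hc₀ u) (hc₀ w)
  obtain ⟨ε, hl, hr, hε⟩ := (eventually_injective_add_smul l (neg_injective.comp hc) |>.and <|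
    (eventually_injective_add_smul r hc).and hle).exists
  refine ⟨l + ε • (-c), r + ε • c, hl, hr, fun u w => ?_⟩
  simpa [sub_eq_add_neg] using hε u w

namespace SimpleGraph

variable {V : Type*}

def intervalOrderOf (l r : V → ℝ) : SimpleGraph V :=
  fromRel fun u w => r u < l w

variable {l r l' r' : V → ℝ}

@[simp]
lemma intervalOrderOf_adj {u w : V} :
    (intervalOrderOf l r).Adj u w ↔ u ≠ w ∧ (r u < l w ∨ r w < l u) :=
  fromRel_adj _ _ _

lemma intervalOrderOf_neg : intervalOrderOf (-r) (-l) = intervalOrderOf l r := by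
  ext u w
  simp [or_comm]

lemma intervalOrderOf_mono_left (h : l ≤ l') : intervalOrderOf l r ≤ intervalOrderOf l' r := by
  intro u w
  simp only [intervalOrderOf_adj]
  exact And.imp_right (Or.imp (fun h' => h'.trans_le (h w)) fun h' => h'.trans_le (h u))

lemma intervalOrderOf_congr (h : ∀ u w, l u ≤ r w ↔ l' u ≤ r' w) :
    intervalOrderOf l r = intervalOrderOf l' r' := by
  ext u w
  simp only [intervalOrderOf_adj, ← not_le, h]

theorem isIntervalOrderGraph_iff_s13 {G : SimpleGraph V} :
    G.IsIntervalOrderGraph ↔ ∃ l r : V → ℝ, l ≤ r ∧ G = intervalOrderOf l r := by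
  have hmeet {a b c d : ℝ} (hab : a ≤ b) (hcd : c ≤ d) :
      (Set.Icc a b ∩ Set.Icc c d).Nonempty ↔ ¬ (b < c ∨ d < a) := by
    rw [Set.Icc_inter_Icc, Set.nonempty_Icc]
    simp only [sup_le_iff, le_inf_iff, not_or, not_lt]
    tauto
  constructor
  · rintro ⟨I, hI, hadj⟩
    choose l r hlr hI using hI
    refine ⟨l, r, hlr, ?_⟩
    ext u w
    by_cases huw : u = w
    · simp [huw]
    have h := hadj u w huw
    rw [compl_adj, hI, hI, hmeet (hlr u) (hlr w)] at h
    rw [intervalOrderOf_adj]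
    tauto
  · rintro ⟨l, r, hlr, rfl⟩
    refine ⟨fun v => Set.Icc (l v) (r v), fun v => ⟨_, _, hlr v, rfl⟩, fun u w huw => ?_⟩
    rw [hmeet (hlr u) (hlr w), compl_adj, intervalOrderOf_adj]
    tauto

theorem exists_injective_of_isIntervalOrderGraph [Finite V] {G : SimpleGraph V}
    (hG : G.IsIntervalOrderGraph) :
    ∃ l r : V → ℝ, l ≤ r ∧ Injective l ∧ Injective r ∧ G = intervalOrderOf l r := by
  obtain ⟨l, r, hlr, rfl⟩ := isIntervalOrderGraph_iff_s13.1 hG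
  obtain ⟨l', r', hl', hr', h⟩ := exists_injective_endpoints l r
  exact ⟨l', r', fun v => (h v v).1 (hlr v), hl', hr', intervalOrderOf_congr h⟩

lemma right_lt_left_of_adj_of_forall_right_le (hlr : l ≤ r) {e f : V} (he : ∀ w, r e ≤ r w)
    (h : (intervalOrderOf l r).Adj e f) : r e < l f :=
  (intervalOrderOf_adj.1 h).2.resolve_right fun h' => (h'.trans_le (hlr e)).not_ge (he f)

lemma right_lt_left_of_adj_of_forall_left_le (hlr : l ≤ r) {e f : V} (he : ∀ w, l w ≤ l e)
    (h : (intervalOrderOf l r).Adj e f) : r f < l e := by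
  rw [← intervalOrderOf_neg] at h
  simpa using
    right_lt_left_of_adj_of_forall_right_le (neg_le_neg hlr) (fun w => neg_le_neg (he w)) h

variable [Finite V] {G H : SimpleGraph V}

/-- Shrinking the interval of `v` from the left up to the least right end of a non-neighbour of `v`
in `G` only separates `v` from `G`-neighbours; by maximality this cannot separate `v` from `u`. -/
theorem exists_not_adj_right_le_of_maximal
    (hH : Maximal (fun H' => H' ≤ G ∧ H'.IsIntervalOrderGraph) H)
    (hlr : l ≤ r) (hHlr : H = intervalOrderOf l r) {u v : V} (huv : ¬ H.Adj u v) :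
    ∃ w, ¬ G.Adj w v ∧ r w ≤ r u := by
  classical
  by_contra! hlt
  obtain ⟨g, hg, hgmin⟩ :=
    Set.exists_min_image {w | ¬ G.Adj w v} r (Set.toFinite _) ⟨v, G.irrefl⟩
  set l' := update l v (max (l v) (r g))
  have hll' : l ≤ l' := by
    intro w
    rcases eq_or_ne w v with rfl | hw
    · simp [l']
    · simp [l', hw]
  have hl'r : l' ≤ r := by
    intro w
    rcases eq_or_ne w v with rfl | hw
    · simpa [l'] using ⟨hlr w, hgmin w G.irrefl⟩
    · simpa [l', hw] using hlr w
  have hH_adj : ∀ a b, a ≠ b → r a < l b → G.Adj a b := fun a b hab h =>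
    hH.1.1 (hHlr ▸ intervalOrderOf_adj.2 ⟨hab, .inl h⟩)
  have hG_adj : ∀ a b, a ≠ b → r a < l' b → G.Adj a b := by
    intro a b hab h
    rcases eq_or_ne b v with rfl | hb
    · rcases lt_max_iff.1 (by simpa [l'] using h) with h | h
      · exact hH_adj a b hab h
      · by_contra hna
        exact (hgmin a hna).not_gt h
    · exact hH_adj a b hab (by simpa [l', hb] using h)
  have hle : intervalOrderOf l' r ≤ H := by
    refine hH.2 ⟨fun a b hab => ?_, isIntervalOrderGraph_iff_s13.2 ⟨l', r, hl'r, rfl⟩⟩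
      (hHlr ▸ intervalOrderOf_mono_left hll')
    obtain ⟨hab, h | h⟩ := intervalOrderOf_adj.1 hab
    exacts [hG_adj a b hab h, (hG_adj b a hab.symm h).symm]
  refine huv (hle (intervalOrderOf_adj.2 ⟨ne_of_apply_ne r (hlt v G.irrefl).ne, .inl ?_⟩))
  simpa [l'] using Or.inr (hlt g hg)

theorem adj_of_maximal_of_forall_right_le
    (hH : Maximal (fun H' => H' ≤ G ∧ H'.IsIntervalOrderGraph) H)
    (hlr : l ≤ r) (hHlr : H = intervalOrderOf l r) (hr : Injective r) {e f : V}
    (he : ∀ w, r e ≤ r w) (hef : G.Adj e f) : H.Adj e f := by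
  by_contra h
  obtain ⟨w, hw, hwe⟩ := exists_not_adj_right_le_of_maximal hH hlr hHlr h
  exact hw (hr (le_antisymm hwe (he w)) ▸ hef)

theorem adj_of_maximal_of_forall_left_le
    (hH : Maximal (fun H' => H' ≤ G ∧ H'.IsIntervalOrderGraph) H)
    (hlr : l ≤ r) (hHlr : H = intervalOrderOf l r) (hl : Injective l) {e f : V}
    (he : ∀ w, l w ≤ l e) (hef : G.Adj e f) : H.Adj e f :=
  adj_of_maximal_of_forall_right_le hH (neg_le_neg hlr) (hHlr.trans intervalOrderOf_neg.symm)
    (neg_injective.comp hl) (fun w => neg_le_neg (he w)) hef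

end SimpleGraph

namespace LineGraphComplete

variable {n : ℕ}

open SimpleGraph

lemma exists_lineGraph_adj (hn : 3 ≤ n) (e : EKn n) :
    ∃ f, (⊤ : SimpleGraph (Fin n)).lineGraph.Adj e f := by
  obtain ⟨a, b, hab⟩ : ∃ a b, (e : Sym2 (Fin n)) = s(a, b) := ⟨_, _, (Quot.out_eq _).symm⟩
  obtain ⟨c, -, hc⟩ := Finset.exists_mem_notMem_of_card_lt_card (s := {a, b})
    (t := Finset.univ) ((Finset.card_le_two).trans_lt (by simp; omega))
  simp only [Finset.mem_insert, Finset.mem_singleton, not_or] at hc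
  refine ⟨⟨s(a, c), (top_adj a c).2 (Ne.symm hc.1)⟩, ?_⟩
  rw [lineGraph_adj_iff_exists]
  refine ⟨fun h => ?_, a, by simp [hab], by simp⟩
  have : c ∈ (e : Sym2 (Fin n)) := by simp [h]
  rw [hab, Sym2.mem_iff] at this
  tauto

lemma exists_common_lineGraph_adj {e f : EKn n} (hne : e ≠ f)
    (h : ¬ (⊤ : SimpleGraph (Fin n)).lineGraph.Adj e f) :
    ∃ g, (⊤ : SimpleGraph (Fin n)).lineGraph.Adj e g ∧
      (⊤ : SimpleGraph (Fin n)).lineGraph.Adj g f := by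
  simp only [lineGraph_adj_iff_exists, hne, ne_eq, not_false_eq_true, true_and, not_exists,
    not_and] at h
  obtain ⟨a, ha⟩ : ∃ a, a ∈ (e : Sym2 (Fin n)) := ⟨_, Sym2.out_fst_mem _⟩
  obtain ⟨c, hc⟩ : ∃ c, c ∈ (f : Sym2 (Fin n)) := ⟨_, Sym2.out_fst_mem _⟩
  have hac : a ≠ c := by rintro rfl; exact h a ha hc
  refine ⟨⟨s(a, c), (top_adj a c).2 hac⟩, ?_, ?_⟩ <;> rw [lineGraph_adj_iff_exists]
  · refine ⟨fun heg => h c ?_ hc, a, ha, by simp⟩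
    rw [heg]; simp
  · refine ⟨fun hgf => h a ha ?_, c, by simp, hc⟩
    rw [← hgf]; simp

lemma exists_eq_mk_of_lineGraph_adj {e f : EKn n}
    (h : (⊤ : SimpleGraph (Fin n)).lineGraph.Adj e f) :
    ∃ a b c, a ≠ b ∧ a ≠ c ∧ b ≠ c ∧
      (e : Sym2 (Fin n)) = s(a, b) ∧ (f : Sym2 (Fin n)) = s(a, c) := by
  obtain ⟨hne, a, hae, haf⟩ := lineGraph_adj_iff_exists.1 h
  obtain ⟨b, hb⟩ := Sym2.mem_iff_exists.1 hae
  obtain ⟨c, hc⟩ := Sym2.mem_iff_exists.1 haf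
  have hab : a ≠ b := by have := e.2; rwa [hb, mem_edgeSet, top_adj] at this
  have hac : a ≠ c := by have := f.2; rwa [hc, mem_edgeSet, top_adj] at this
  refine ⟨a, b, c, hab, hac, ?_, hb, hc⟩
  rintro rfl
  exact hne (Subtype.ext (hb.trans hc.symm))

lemma delta_le_of_forall_adj {H : SimpleGraph (EKn n)} {e : EKn n} {a b : Fin n}
    (he : (e : Sym2 (Fin n)) = s(a, b))
    (hstar : ∀ f, (⊤ : SimpleGraph (Fin n)).lineGraph.Adj e f → H.Adj e f) : delta a b ≤ H := by
  have key : ∀ e' f : EKn n, e' ≠ f → (e' : Sym2 (Fin n)) = s(a, b) →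
      a ∈ (f : Sym2 (Fin n)) ∨ b ∈ (f : Sym2 (Fin n)) → H.Adj e' f := by
    intro e' f hne he' hf
    obtain rfl : e' = e := Subtype.ext (he'.trans he.symm)
    refine hstar f (lineGraph_adj_iff_exists.2 ⟨hne, ?_⟩)
    rcases hf with hf | hf
    exacts [⟨a, by simp [he], hf⟩, ⟨b, by simp [he], hf⟩]
  intro e' f h
  rw [delta, fromRel_adj] at h
  obtain ⟨hne, ⟨he', hf⟩ | ⟨hf', he⟩⟩ := h
  · exact key e' f hne he' hf
  · exact (key f e' hne.symm hf' he).symm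

/-- For `n ≥ 5`, every maximal interval-order subgraph `H` of `L(K_n)` contains
`δ_{ab} ∪ δ_{ac}` for some three distinct vertices `a, b, c` of `K_n`. -/
theorem delta_sup_delta_le_maximal_intervalOrder_subgraph (hn : 5 ≤ n)
    (H : SimpleGraph (EKn n))
    (hH : Maximal (fun H' : SimpleGraph (EKn n) =>
      H' ≤ (⊤ : SimpleGraph (Fin n)).lineGraph ∧ H'.IsIntervalOrderGraph) H) :
    ∃ a b c : Fin n, a ≠ b ∧ a ≠ c ∧ b ≠ c ∧ delta a b ⊔ delta a c ≤ H := by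
  obtain ⟨l, r, hlr, hl, hr, hHlr⟩ := exists_injective_of_isIntervalOrderGraph hH.1.2
  have : Nonempty (EKn n) := ⟨⟨s(⟨0, by omega⟩, ⟨1, by omega⟩), by simp⟩⟩
  obtain ⟨e₁, he₁⟩ := Finite.exists_min r
  obtain ⟨e₂, he₂⟩ := Finite.exists_max l
  have hstar₁ f := adj_of_maximal_of_forall_right_le hH hlr hHlr hr he₁ (f := f)
  have hstar₂ f := adj_of_maximal_of_forall_left_le hH hlr hHlr hl he₂ (f := f)
  have hne : e₁ ≠ e₂ := by
    rintro rfl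
    obtain ⟨f, hf⟩ := exists_lineGraph_adj (by omega) e₁
    have h := right_lt_left_of_adj_of_forall_right_le hlr he₁ (hHlr ▸ hstar₁ f hf)
    exact ((h.trans_le (he₂ f)).trans_le (hlr e₁)).false
  have hadj : (⊤ : SimpleGraph (Fin n)).lineGraph.Adj e₁ e₂ := by
    by_contra h
    obtain ⟨g, hg₁, hg₂⟩ := exists_common_lineGraph_adj hne h
    have h₁ := right_lt_left_of_adj_of_forall_right_le hlr he₁ (hHlr ▸ hstar₁ g hg₁)
    have h₂ := right_lt_left_of_adj_of_forall_left_le hlr he₂ (hHlr ▸ hstar₂ g hg₂.symm)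
    exact h <| hH.1.1 <| hHlr ▸
      intervalOrderOf_adj.2 ⟨hne, .inl (h₁.trans ((hlr g).trans_lt h₂))⟩
  obtain ⟨a, b, c, hab, hac, hbc, he₁ab, he₂ac⟩ := exists_eq_mk_of_lineGraph_adj hadj
  exact ⟨a, b, c, hab, hac, hbc,
    sup_le (delta_le_of_forall_adj he₁ab hstar₁) (delta_le_of_forall_adj he₂ac hstar₂)⟩

end LineGraphComplete
end

section
/- For every integer n ≥ 5, the boxicity of the complement of the line graph L(K_n) is at most n − 2. -/
/-!
Place the vertices on the real line by an injective `p`, with `u` leftmost, `v` rightmost and all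
other vertices in `[lo, hi]`, strictly between them. Use one coordinate for each vertex
`w ∉ {u, v}`: an edge through `w` gets the point `p a`, where `a` is its other endpoint, and an
edge avoiding `w` gets `[lo, hi]`, widened to `p u` on the left if the edge avoids `u` and to `p v`
on the right if it avoids `v`. Disjoint edges then meet in every coordinate. Two edges `xa`, `xb`
are separated at coordinate `x` if `x ∉ {u, v}`; if `x = u`, at the coordinate of whichever of
`a`, `b` is not `v`, where one edge is the point `p u` and the other starts at `lo > p u`
(symmetrically for `x = v`).
-/

open Set

namespace SimpleGraph

theorem boxicity_le_card {V ι : Type*} [Fintype ι] (G : SimpleGraph V) (I : V → ι → Set ℝ)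
    (hI : ∀ v i, ∃ a b : ℝ, a ≤ b ∧ I v i = Icc a b)
    (hadj : ∀ u v, u ≠ v → (G.Adj u v ↔ ∀ i, (I u i ∩ I v i).Nonempty)) :
    G.boxicity ≤ Fintype.card ι := by
  let σ := (Fintype.equivFin ι).symm
  refine Nat.sInf_le ⟨fun v i => I v (σ i), fun v i => hI v (σ i), fun u v huv => ?_⟩
  exact (hadj u v huv).trans σ.forall_congr_right.symm

theorem boxicity_eq_zero_of_subsingleton {V : Type*} [Subsingleton V] (G : SimpleGraph V) :
    G.boxicity = 0 :=
  Nat.eq_zero_of_le_zero <| Nat.sInf_le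
    ⟨fun _ => Fin.elim0, fun _ i => i.elim0, fun u v huv => (huv (Subsingleton.elim u v)).elim⟩

end SimpleGraph

namespace ComplLineGraphBox

variable {V : Type*} [DecidableEq V] (p : V → ℝ) (u v : V) (lo hi : ℝ)

def lowerEnd (e : Sym2 V) : ℝ := if u ∈ e then lo else p u

def upperEnd (e : Sym2 V) : ℝ := if v ∈ e then hi else p v

noncomputable def edgeBox (e : Sym2 V) (w : V) : Set ℝ :=
  if h : w ∈ e then {p (Sym2.Mem.other h)} else Icc (lowerEnd p u lo e) (upperEnd p v hi e)

variable {p u v lo hi}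

theorem lowerEnd_le (hlo : p u ≤ lo) (e : Sym2 V) : lowerEnd p u lo e ≤ lo := by
  unfold lowerEnd; split_ifs <;> linarith

theorem le_upperEnd (hhi : hi ≤ p v) (e : Sym2 V) : hi ≤ upperEnd p v hi e := by
  unfold upperEnd; split_ifs <;> linarith

theorem mem_Icc_lowerEnd_upperEnd (hlo : p u < lo) (hlh : lo ≤ hi) (hhi : hi < p v)
    (hmid : ∀ w, w ≠ u → w ≠ v → p w ∈ Icc lo hi) {e : Sym2 V} {c : V} (hc : c ∉ e) :
    p c ∈ Icc (lowerEnd p u lo e) (upperEnd p v hi e) := by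
  have hlow := lowerEnd_le hlo.le e
  have hupp := le_upperEnd hhi.le e
  by_cases hcu : c = u
  · subst hcu
    rw [lowerEnd, if_neg hc]
    exact ⟨le_rfl, by linarith⟩
  by_cases hcv : c = v
  · subst hcv
    rw [upperEnd, if_neg hc]
    exact ⟨by linarith, le_rfl⟩
  obtain ⟨h₁, h₂⟩ := hmid c hcu hcv
  exact ⟨hlow.trans h₁, h₂.trans hupp⟩

theorem edgeBox_mk_self (w a : V) : edgeBox p u v lo hi s(w, a) w = {p a} := by
  have h : w ∈ s(w, a) := Sym2.mem_mk_left w a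
  rw [edgeBox, dif_pos h, Sym2.congr_right.mp (Sym2.other_spec h)]

theorem edgeBox_of_notMem {e : Sym2 V} {w : V} (h : w ∉ e) :
    edgeBox p u v lo hi e w = Icc (lowerEnd p u lo e) (upperEnd p v hi e) :=
  dif_neg h

theorem exists_edgeBox_eq_Icc (hlo : p u < lo) (hlh : lo ≤ hi) (hhi : hi < p v)
    (e : Sym2 V) (w : V) : ∃ a b : ℝ, a ≤ b ∧ edgeBox p u v lo hi e w = Icc a b := by
  by_cases h : w ∈ e
  · exact ⟨_, _, le_rfl, by rw [edgeBox, dif_pos h, Icc_self]⟩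
  · exact ⟨_, _, (lowerEnd_le hlo.le e).trans (hlh.trans (le_upperEnd hhi.le e)),
      edgeBox_of_notMem h⟩

theorem edgeBox_inter_nonempty (hlo : p u < lo) (hlh : lo ≤ hi) (hhi : hi < p v)
    (hmid : ∀ w, w ≠ u → w ≠ v → p w ∈ Icc lo hi) {e f : Sym2 V}
    (hef : ∀ x ∈ e, x ∉ f) (w : V) :
    (edgeBox p u v lo hi e w ∩ edgeBox p u v lo hi f w).Nonempty := by
  have of_mem : ∀ {e f : Sym2 V}, (∀ x ∈ e, x ∉ f) → w ∈ e →
      (edgeBox p u v lo hi e w ∩ edgeBox p u v lo hi f w).Nonempty := by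
    intro e f hef hwe
    refine ⟨p (Sym2.Mem.other hwe), by rw [edgeBox, dif_pos hwe]; rfl, ?_⟩
    rw [edgeBox_of_notMem (hef w hwe)]
    exact mem_Icc_lowerEnd_upperEnd hlo hlh hhi hmid (hef _ (Sym2.other_mem hwe))
  by_cases hwe : w ∈ e
  · exact of_mem hef hwe
  by_cases hwf : w ∈ f
  · rw [inter_comm]
    exact of_mem (fun x hxf hxe => hef x hxe hxf) hwf
  rw [edgeBox_of_notMem hwe, edgeBox_of_notMem hwf]
  exact ⟨lo, ⟨lowerEnd_le hlo.le e, hlh.trans (le_upperEnd hhi.le e)⟩,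
    ⟨lowerEnd_le hlo.le f, hlh.trans (le_upperEnd hhi.le f)⟩⟩

theorem edgeBox_mk_inter_eq_empty_of_left (hlo : p u < lo) {a b : V} (hau : a ≠ u)
    (hab : a ≠ b) : edgeBox p u v lo hi s(u, a) a ∩ edgeBox p u v lo hi s(u, b) a = ∅ := by
  have haf : a ∉ s(u, b) := by simp [hau, hab]
  rw [Sym2.eq_swap, edgeBox_mk_self, edgeBox_of_notMem haf, lowerEnd,
    if_pos (Sym2.mem_mk_left u b)]
  simp [hlo.not_ge]

theorem edgeBox_mk_inter_eq_empty_of_right (hhi : hi < p v) {a b : V} (hav : a ≠ v)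
    (hab : a ≠ b) : edgeBox p u v lo hi s(v, a) a ∩ edgeBox p u v lo hi s(v, b) a = ∅ := by
  have haf : a ∉ s(v, b) := by simp [hav, hab]
  rw [Sym2.eq_swap, edgeBox_mk_self, edgeBox_of_notMem haf, upperEnd,
    if_pos (Sym2.mem_mk_left v b)]
  simp [hhi.not_ge]

theorem exists_edgeBox_mk_inter_eq_empty (hp : Function.Injective p) (hlo : p u < lo)
    (hhi : hi < p v) {x a b : V} (hxa : x ≠ a) (hxb : x ≠ b) (hab : a ≠ b) :
    ∃ w, w ≠ u ∧ w ≠ v ∧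
      edgeBox p u v lo hi s(x, a) w ∩ edgeBox p u v lo hi s(x, b) w = ∅ := by
  by_cases hxu : x = u
  · subst hxu
    by_cases hav : a = v
    · subst hav
      refine ⟨b, hxb.symm, hab.symm, ?_⟩
      rw [inter_comm]
      exact edgeBox_mk_inter_eq_empty_of_left hlo hxb.symm hab.symm
    · exact ⟨a, hxa.symm, hav, edgeBox_mk_inter_eq_empty_of_left hlo hxa.symm hab⟩
  by_cases hxv : x = v
  · subst hxv
    by_cases hau : a = u
    · subst hau
      refine ⟨b, hab.symm, hxb.symm, ?_⟩
      rw [inter_comm]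
      exact edgeBox_mk_inter_eq_empty_of_right hhi hxb.symm hab.symm
    · exact ⟨a, hau, hxa.symm, edgeBox_mk_inter_eq_empty_of_right hhi hxa.symm hab⟩
  refine ⟨x, hxu, hxv, ?_⟩
  simp [edgeBox_mk_self, hp.ne hab]

theorem boxicity_compl_lineGraph_le_of_layout [Fintype V] (G : SimpleGraph V)
    (hp : Function.Injective p) (hlo : p u < lo) (hlh : lo ≤ hi) (hhi : hi < p v)
    (hmid : ∀ w, w ≠ u → w ≠ v → p w ∈ Icc lo hi) :
    G.lineGraphᶜ.boxicity ≤ Fintype.card V - 2 := by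
  have huv : u ≠ v := ne_of_apply_ne p (hlo.trans_le hlh |>.trans hhi).ne
  have hcard : Fintype.card ↥(({u, v} : Finset V)ᶜ) = Fintype.card V - 2 := by
    rw [Fintype.card_coe, Finset.card_compl, Finset.card_pair huv]
  refine hcard ▸ G.lineGraphᶜ.boxicity_le_card (fun e w => edgeBox p u v lo hi e w)
    (fun e w => exists_edgeBox_eq_Icc hlo hlh hhi e w) fun e f hef => ?_
  rw [SimpleGraph.compl_adj, SimpleGraph.lineGraph_adj_iff_exists]
  constructor
  · rintro ⟨-, hdisj⟩ w
    exact edgeBox_inter_nonempty hlo hlh hhi hmid (fun x hxe hxf => hdisj ⟨hef, x, hxe, hxf⟩) w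
  · refine fun hall => ⟨hef, ?_⟩
    rintro ⟨-, x, hxe, hxf⟩
    have hxa := Sym2.other_ne (G.not_isDiag_of_mem_edgeSet e.2) hxe
    have hxb := Sym2.other_ne (G.not_isDiag_of_mem_edgeSet f.2) hxf
    have hab : Sym2.Mem.other hxe ≠ Sym2.Mem.other hxf := fun h =>
      hef (Subtype.ext (by rw [← Sym2.other_spec hxe, ← Sym2.other_spec hxf, h]))
    obtain ⟨w, hwu, hwv, hw⟩ :=
      exists_edgeBox_mk_inter_eq_empty hp hlo hhi hxa.symm hxb.symm hab
    rw [Sym2.other_spec hxe, Sym2.other_spec hxf] at hw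
    exact (hall ⟨w, by simp [hwu, hwv]⟩).ne_empty hw

end ComplLineGraphBox

open ComplLineGraphBox in
theorem SimpleGraph.boxicity_compl_lineGraph_le {V : Type*} [Fintype V] (G : SimpleGraph V) :
    G.lineGraphᶜ.boxicity ≤ Fintype.card V - 2 := by
  classical
  obtain hV | ⟨m, hm⟩ : Fintype.card V ≤ 1 ∨ ∃ m, Fintype.card V = m + 2 :=
    (le_or_gt _ 1).imp_right fun h => ⟨_, (Nat.sub_add_cancel h).symm⟩
  · have : Subsingleton V := Fintype.card_le_one_iff_subsingleton.mp hV
    have : IsEmpty G.edgeSet :=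
      ⟨fun e => G.not_isDiag_of_mem_edgeSet e.2 (Sym2.isDiag_of_subsingleton _)⟩
    simp [boxicity_eq_zero_of_subsingleton]
  let σ := Fintype.equivFinOfCardEq hm
  -- half-integral `lo`, `hi` keep `lo ≤ hi` also when `m = 0`
  refine boxicity_compl_lineGraph_le_of_layout (u := σ.symm 0) (v := σ.symm (Fin.last _))
    (lo := 1 / 2) (hi := m + 1 / 2) G (p := fun w => (σ w : ℕ)) ?_ ?_ ?_ ?_ ?_
  · exact Nat.cast_injective.comp (Fin.val_injective.comp σ.injective)
  · norm_num
  · norm_num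
  · norm_num
  · intro w hwu hwv
    have h₁ : 1 ≤ (σ w : ℕ) :=
      Nat.one_le_iff_ne_zero.mpr (Fin.val_ne_zero_iff.mpr fun h => hwu (σ.eq_symm_apply.mpr h))
    have h₂ : (σ w : ℕ) < m + 1 := Fin.val_lt_last fun h => hwv (σ.eq_symm_apply.mpr h)
    have h₁' : (1 : ℝ) ≤ (σ w : ℕ) := by exact_mod_cast h₁
    have h₂' : ((σ w : ℕ) : ℝ) ≤ m := by exact_mod_cast Nat.lt_succ_iff.mp h₂
    constructor <;> linarith

theorem boxicity_compl_lineGraph_complete_le_general (n : ℕ) :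
    ((⊤ : SimpleGraph (Fin n)).lineGraph)ᶜ.boxicity ≤ n - 2 := by
  simpa using (⊤ : SimpleGraph (Fin n)).boxicity_compl_lineGraph_le

/-- For every `n ≥ 5`, the boxicity of the complement of `L(K_n)` is at most `n - 2`. -/
theorem boxicity_compl_lineGraph_complete_le (n : ℕ) (hn : 5 ≤ n) :
    ((⊤ : SimpleGraph (Fin n)).lineGraph)ᶜ.boxicity ≤ n - 2 :=
  boxicity_compl_lineGraph_complete_le_general n
end
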